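/- Let e be a function on pairs of space-time points (x,s;y,t) with s < t, satisfying the reverse triangle inequality, e ≥ d where d(x,s;y,t) = -(y-x)²/(t-s), and Θ(e) ≤ m where Θ(e) is the supremum over finite collections of points u_i = (x_i,s_i;y_i,t_i) with disjoint time intervals (s_i,t_i) of ∑_i [e(u_i)-d(u_i)]₊^{3/2}(t_i-s_i)^{-1/2}. Then for any path γ:[s,t] → ℝ, the e-length and d-length of γ satisfy |γ|_d ≤ |γ|_e ≤ |γ|_d + m^{2/3}(t-s)^{1/3}. -/

import Mathlib

/-- The Dirichlet metric `d(x,s;y,t) = -(y-x)^2/(t-s)`. -/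
noncomputable def dirich (x s y t : ℝ) : ℝ := -(y - x)^2 / (t - s)

/-- `Θ(e,u) = [e(u) - d(u)]₊^{3/2} (t-s)^{-1/2}` for `u = (x,s;y,t)`. -/
noncomputable def Theta (e : ℝ → ℝ → ℝ → ℝ → ℝ) (x s y t : ℝ) : ℝ :=
  (max (e x s y t - dirich x s y t) 0) ^ ((3 : ℝ)/2) / Real.sqrt (t - s)

/-- The length of a path `γ : [a,b] → ℝ` with respect to a directed metric `e`:
the infimum over partitions `a = r_0 < ... < r_k = b` of the sums of `e`-increments. -/
noncomputable def eLen (e : ℝ → ℝ → ℝ → ℝ → ℝ) (a b : ℝ) (γ : ℝ → ℝ) : EReal :=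
  sInf {x : EReal | ∃ (k : ℕ) (r : ℕ → ℝ), 0 < k ∧ r 0 = a ∧ r k = b ∧
    (∀ i < k, r i < r (i + 1)) ∧
    x = ((∑ i ∈ Finset.range k,
      e (γ (r i)) (r i) (γ (r (i + 1))) (r (i + 1)) : ℝ) : EReal)}


/-!
The lower bound holds partition by partition, since `d ≤ e` termwise. For the upper bound, on a
partition `s = r₀ < ⋯ < r_k = t` with `uᵢ = (γ rᵢ, rᵢ; γ rᵢ₊₁, rᵢ₊₁)` and `Δᵢ = rᵢ₊₁ - rᵢ` we
have `e(uᵢ) ≤ d(uᵢ) + [e(uᵢ) - d(uᵢ)]₊`, and Hölder's inequality with exponents `3/2` and `3`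
applied to `[e(uᵢ) - d(uᵢ)]₊ = (Θ(e,uᵢ) Δᵢ^{1/2})^{2/3} Δᵢ^{1/3}` gives
`∑ [e(uᵢ) - d(uᵢ)]₊ ≤ (∑ Θ(e,uᵢ))^{2/3} (t - s)^{1/3}`. The intervals `(rᵢ, rᵢ₊₁)` are disjoint,
so `∑ Θ(e,uᵢ) ≤ m`.
-/

open Finset Real

lemma sum_le_rpow_sum_rpow_div_sqrt_mul_rpow_sum {ι : Type*} (s : Finset ι) {a b : ι → ℝ}
    (ha : ∀ i ∈ s, 0 ≤ a i) (hb : ∀ i ∈ s, 0 < b i) :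
    ∑ i ∈ s, a i ≤
      (∑ i ∈ s, a i ^ (3 / 2 : ℝ) / √(b i)) ^ (2 / 3 : ℝ) * (∑ i ∈ s, b i) ^ (1 / 3 : ℝ) := by
  have hpq : HolderConjugate (3 / 2 : ℝ) 3 := ⟨by norm_num, by norm_num, by norm_num⟩
  have H := inner_le_Lp_mul_Lq_of_nonneg s (f := fun i => a i / b i ^ (1 / 3 : ℝ))
    (g := fun i => b i ^ (1 / 3 : ℝ)) hpq
    (fun i hi => div_nonneg (ha i hi) (rpow_nonneg (hb i hi).le _))
    (fun i hi => rpow_nonneg (hb i hi).le _)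
  have hprod : ∀ i ∈ s, a i / b i ^ (1 / 3 : ℝ) * b i ^ (1 / 3 : ℝ) = a i := fun i hi =>
    div_mul_cancel₀ _ (rpow_pos_of_pos (hb i hi) _).ne'
  have hf : ∀ i ∈ s, (a i / b i ^ (1 / 3 : ℝ)) ^ (3 / 2 : ℝ) = a i ^ (3 / 2 : ℝ) / √(b i) := by
    intro i hi
    rw [div_rpow (ha i hi) (rpow_nonneg (hb i hi).le _), ← rpow_mul (hb i hi).le, sqrt_eq_rpow]
    norm_num
  have hg : ∀ i ∈ s, (b i ^ (1 / 3 : ℝ)) ^ (3 : ℝ) = b i := fun i hi => by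
    rw [← rpow_mul (hb i hi).le]
    norm_num
  rw [sum_congr rfl hprod, sum_congr rfl hf, sum_congr rfl hg] at H
  convert H using 3
  norm_num

lemma Theta_nonneg (e : ℝ → ℝ → ℝ → ℝ → ℝ) (x s y t : ℝ) : 0 ≤ Theta e x s y t :=
  div_nonneg (rpow_nonneg (le_max_right _ _) _) (sqrt_nonneg _)

/-- `Θ(e) ≤ m`, the supremum being over families of space-time pairs with disjoint time
intervals. -/
def ThetaBoundedBy (e : ℝ → ℝ → ℝ → ℝ → ℝ) (m : ℝ) : Prop :=
  ∀ (k : ℕ) (x s y t : Fin k → ℝ), (∀ i, s i < t i) →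
    (∀ i j, i ≠ j → Set.Ioo (s i) (t i) ∩ Set.Ioo (s j) (t j) = ∅) →
    (∑ i, Theta e (x i) (s i) (y i) (t i)) ≤ m

structure IsPartition (a b : ℝ) (k : ℕ) (r : ℕ → ℝ) : Prop where
  pos : 0 < k
  zero : r 0 = a
  last : r k = b
  lt_succ : ∀ i < k, r i < r (i + 1)

def partitionSum (e : ℝ → ℝ → ℝ → ℝ → ℝ) (γ : ℝ → ℝ) (k : ℕ) (r : ℕ → ℝ) : ℝ :=
  ∑ i ∈ range k, e (γ (r i)) (r i) (γ (r (i + 1))) (r (i + 1))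

namespace IsPartition

variable {a b : ℝ} {k : ℕ} {r : ℕ → ℝ}

lemma strictMonoOn (hp : IsPartition a b k r) : StrictMonoOn r (Set.Iic k) :=
  strictMonoOn_Iic_of_lt_succ fun i hi => by simpa using hp.lt_succ i hi

lemma lt (hp : IsPartition a b k r) : a < b := by
  rw [← hp.zero, ← hp.last]
  exact hp.strictMonoOn (Set.mem_Iic.2 (Nat.zero_le k)) (Set.mem_Iic.2 le_rfl) hp.pos

lemma sum_sub (hp : IsPartition a b k r) : ∑ i ∈ range k, (r (i + 1) - r i) = b - a := by
  rw [sum_range_sub r, hp.zero, hp.last]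

lemma Ioo_inter_Ioo_eq_empty (hp : IsPartition a b k r) {i j : ℕ} (hij : i < j) (hj : j ≤ k) :
    Set.Ioo (r i) (r (i + 1)) ∩ Set.Ioo (r j) (r (j + 1)) = ∅ := by
  have hle : r (i + 1) ≤ r j :=
    hp.strictMonoOn.monotoneOn (Set.mem_Iic.2 (by omega)) (Set.mem_Iic.2 hj) hij
  exact Set.eq_empty_iff_forall_notMem.2 fun z ⟨⟨_, hz⟩, ⟨hz', _⟩⟩ => by linarith

lemma sum_Theta_le {e : ℝ → ℝ → ℝ → ℝ → ℝ} {m : ℝ} (hΘ : ThetaBoundedBy e m)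
    (hp : IsPartition a b k r) (γ : ℝ → ℝ) :
    ∑ i ∈ range k, Theta e (γ (r i)) (r i) (γ (r (i + 1))) (r (i + 1)) ≤ m := by
  rw [sum_range]
  refine hΘ k (fun i => γ (r i)) (fun i => r i) (fun i => γ (r (i + 1))) (fun i => r (i + 1))
    (fun i => hp.lt_succ i i.2) fun i j hij => ?_
  rcases lt_or_gt_of_ne (Fin.val_ne_of_ne hij) with h | h
  · exact hp.Ioo_inter_Ioo_eq_empty h j.2.le
  · rw [Set.inter_comm]
    exact hp.Ioo_inter_Ioo_eq_empty h i.2.le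

end IsPartition

lemma partitionSum_le_partitionSum_dirich_add {e : ℝ → ℝ → ℝ → ℝ → ℝ} {m a b : ℝ} {k : ℕ}
    {r : ℕ → ℝ} (hΘ : ThetaBoundedBy e m) (hp : IsPartition a b k r) (γ : ℝ → ℝ) :
    partitionSum e γ k r ≤
      partitionSum dirich γ k r + m ^ (2 / 3 : ℝ) * (b - a) ^ (1 / 3 : ℝ) := by
  set excess : ℕ → ℝ := fun i =>
    max (e (γ (r i)) (r i) (γ (r (i + 1))) (r (i + 1)) -
      dirich (γ (r i)) (r i) (γ (r (i + 1))) (r (i + 1))) 0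
  have h_split : partitionSum e γ k r ≤ partitionSum dirich γ k r + ∑ i ∈ range k, excess i := by
    rw [partitionSum, partitionSum, ← sum_add_distrib]
    exact sum_le_sum fun i _ => sub_le_iff_le_add'.1 (le_max_left _ _)
  have h_holder : ∑ i ∈ range k, excess i ≤
      (∑ i ∈ range k, Theta e (γ (r i)) (r i) (γ (r (i + 1))) (r (i + 1))) ^ (2 / 3 : ℝ) *
        (b - a) ^ (1 / 3 : ℝ) := by
    rw [← hp.sum_sub]
    exact sum_le_rpow_sum_rpow_div_sqrt_mul_rpow_sum (range k) (fun i _ => le_max_right _ _)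
      fun i hi => sub_pos.2 (hp.lt_succ i (mem_range.1 hi))
  have h_Theta : (∑ i ∈ range k, Theta e (γ (r i)) (r i) (γ (r (i + 1))) (r (i + 1))) ^ (2 / 3 : ℝ)
      ≤ m ^ (2 / 3 : ℝ) :=
    rpow_le_rpow (sum_nonneg fun _ _ => Theta_nonneg ..) (hp.sum_Theta_le hΘ γ) (by norm_num)
  have h_time := rpow_nonneg (sub_pos.2 hp.lt).le (1 / 3 : ℝ)
  linarith [mul_le_mul_of_nonneg_right h_Theta h_time]

lemma eLen_le_eLen_add {e e' : ℝ → ℝ → ℝ → ℝ → ℝ} {a b : ℝ} {γ : ℝ → ℝ} (c : ℝ)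
    (h : ∀ k r, IsPartition a b k r → partitionSum e γ k r ≤ partitionSum e' γ k r + c) :
    eLen e a b γ ≤ eLen e' a b γ + c := by
  rw [← EReal.sub_le_iff_le_add (.inl (EReal.coe_ne_bot c)) (.inl (EReal.coe_ne_top c))]
  refine le_sInf ?_
  rintro _ ⟨k, r, hk, h0, hk', hr, rfl⟩
  rw [EReal.sub_le_iff_le_add (.inl (EReal.coe_ne_bot c)) (.inl (EReal.coe_ne_top c))]
  calc eLen e a b γ ≤ (partitionSum e γ k r : EReal) := sInf_le ⟨k, r, hk, h0, hk', hr, rfl⟩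
    _ ≤ _ := EReal.coe_le_coe_iff.2 (h k r ⟨hk, h0, hk', hr⟩)

lemma eLen_mono {e e' : ℝ → ℝ → ℝ → ℝ → ℝ} {a b : ℝ} {γ : ℝ → ℝ}
    (h : ∀ x s y t, s < t → e x s y t ≤ e' x s y t) : eLen e a b γ ≤ eLen e' a b γ := by
  simpa using eLen_le_eLen_add (e := e) (e' := e') (a := a) (b := b) (γ := γ) 0 fun k r hp =>
    by rw [add_zero]; exact sum_le_sum fun i hi => h _ _ _ _ (hp.lt_succ i (mem_range.1 hi))

theorem dirichlet_close_path_lengths_general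
    (e : ℝ → ℝ → ℝ → ℝ → ℝ) (m : ℝ)
    (hdom : ∀ x s y t : ℝ, s < t → dirich x s y t ≤ e x s y t)
    (hTheta : ∀ (k : ℕ) (x s y t : Fin k → ℝ), (∀ i, s i < t i) →
      (∀ i j, i ≠ j → Set.Ioo (s i) (t i) ∩ Set.Ioo (s j) (t j) = ∅) →
      (∑ i, Theta e (x i) (s i) (y i) (t i)) ≤ m)
    (s t : ℝ) (γ : ℝ → ℝ) :
    eLen dirich s t γ ≤ eLen e s t γ ∧
    eLen e s t γ ≤ eLen dirich s t γ +
      ((m ^ ((2:ℝ)/3) * (t - s) ^ ((1:ℝ)/3) : ℝ) : EReal) :=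
  ⟨eLen_mono hdom,
    eLen_le_eLen_add _ fun _ _ hp => partitionSum_le_partitionSum_dirich_add hTheta hp γ⟩

/-- For a Dirichlet-dominant directed metric `e` with `Θ(e) ≤ m`, path lengths
satisfy `|γ|_d ≤ |γ|_e ≤ |γ|_d + m^{2/3}(t-s)^{1/3}`. -/
theorem dirichlet_close_path_lengths
    (e : ℝ → ℝ → ℝ → ℝ → ℝ) (m : ℝ) (hm : 0 < m)
    (htri : ∀ x s y r z t : ℝ, s < r → r < t →
      e x s y r + e y r z t ≤ e x s z t)
    (hdom : ∀ x s y t : ℝ, s < t → dirich x s y t ≤ e x s y t)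
    (hTheta : ∀ (k : ℕ) (x s y t : Fin k → ℝ), (∀ i, s i < t i) →
      (∀ i j, i ≠ j → Set.Ioo (s i) (t i) ∩ Set.Ioo (s j) (t j) = ∅) →
      (∑ i, Theta e (x i) (s i) (y i) (t i)) ≤ m)
    (s t : ℝ) (hst : s < t) (γ : ℝ → ℝ) :
    eLen dirich s t γ ≤ eLen e s t γ ∧
    eLen e s t γ ≤ eLen dirich s t γ +
      ((m ^ ((2:ℝ)/3) * (t - s) ^ ((1:ℝ)/3) : ℝ) : EReal) :=
  dirichlet_close_path_lengths_general e m hdom hTheta s t γ
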